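/- Let λ denote the Liouville function and let α > 1 be real. If there is a constant c_α > 0 such that for every positive integer N, ∫_0^1 |N^{-1/2} · Σ_{j=1}^{N} λ(j) e^{2πijx}|^α dx ≤ c_α, then there exists a constant C_α > 0 such that for every positive integer N, |Σ_{j=1}^{N} λ(j)| ≤ C_α · N^{1/2 + 1/α}. -/

import Mathlib

/-!
Let `F(x) = ∑_{j ≤ N} λ(j) e(jx)` and let `D(x) = ∑_{j ≤ N} e(jx)` be the Dirichlet kernel. By
orthogonality `∑_{j ≤ N} λ(j) = ∫₀¹ F · conj D`, so Hölder's inequality with the exponent `q`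
conjugate to `α` bounds the partial sum by `‖F‖_α ‖D‖_q`. The hypothesis gives
`‖F‖_α ≤ c^{1/α} N^{1/2}`, and the classical bound `|D(x)| ≤ min(N, 1/(2x))` on `(0, 1/2]`,
with the symmetry `|D(1 - x)| = |D(x)|`, gives `‖D‖_q^q ≤ α N^{q-1}`, i.e.
`‖D‖_q ≤ α^{1/q} N^{1/α}`.
-/

open Finset Real Complex MeasureTheory

/-- The Liouville function: `λ n = (-1)^Ω(n)`, where `Ω n` is the number of prime
factors of `n` counted with multiplicity. -/
def liouvilleFun (n : ℕ) : ℤ := (-1) ^ (ArithmeticFunction.cardFactors n)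

open ComplexConjugate

lemma integral_rpow_neg_le {a b q : ℝ} (ha : 0 < a) (hab : a ≤ b) (hq : 1 < q) :
    ∫ x in a..b, x ^ (-q) ≤ a ^ (1 - q) / (q - 1) := by
  have h0 : (0 : ℝ) ∉ Set.uIcc a b := by
    rw [Set.uIcc_of_le hab]; exact fun h => (not_le.mpr ha) h.1
  rw [integral_rpow (Or.inr ⟨by linarith, h0⟩), show -q + 1 = 1 - q by ring,
    ← neg_div_neg_eq, neg_sub, neg_sub]
  exact div_le_div_of_nonneg_right (sub_le_self _ (rpow_nonneg (ha.le.trans hab) _))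
    (by linarith)

lemma integral_two_mul_rpow_neg_le {a b q : ℝ} (ha : 0 < a) (hab : a ≤ b) (hq : 1 < q) :
    ∫ x in a..b, (2 * x) ^ (-q) ≤ (2 * a) ^ (1 - q) / (2 * (q - 1)) := by
  rw [intervalIntegral.integral_comp_mul_left (fun x => x ^ (-q)) two_ne_zero, smul_eq_mul,
    mul_comm 2 (q - 1), ← div_div, inv_mul_eq_div]
  gcongr
  exact integral_rpow_neg_le (by positivity) (by linarith) hq

lemma integral_rpow_le_of_le_min {f : ℝ → ℝ} {M q : ℝ} (hf : Continuous f)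
    (hf₀ : ∀ x, 0 ≤ f x) (hM : 1 ≤ M) (hq : 1 < q)
    (hfM : ∀ x ∈ Set.Icc (0 : ℝ) (1 / 2), f x ≤ M)
    (hfx : ∀ x ∈ Set.Ioc (0 : ℝ) (1 / 2), f x ≤ (2 * x)⁻¹) :
    ∫ x in (0 : ℝ)..1 / 2, f x ^ q ≤ q / (2 * (q - 1)) * M ^ (q - 1) := by
  have hM₀ : 0 < M := by linarith
  have hq₁ : q - 1 ≠ 0 := by linarith
  -- the two bounds on `f` cross at `a`
  set a := (2 * M)⁻¹ with ha
  have ha₀ : 0 < a := by positivity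
  have ha₁ : a ≤ 1 / 2 := by rw [ha, one_div]; gcongr; linarith
  have hfq : Continuous fun x => f x ^ q := hf.rpow_const fun _ => Or.inr (by linarith)
  have hnear : ∫ x in (0 : ℝ)..a, f x ^ q ≤ M ^ (q - 1) / 2 :=
    calc ∫ x in (0 : ℝ)..a, f x ^ q ≤ ∫ x in (0 : ℝ)..a, M ^ q :=
          intervalIntegral.integral_mono_on ha₀.le (hfq.intervalIntegrable _ _)
            intervalIntegrable_const fun x hx => by
              gcongr; exacts [hf₀ x, hfM x ⟨hx.1, hx.2.trans ha₁⟩]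
      _ = M ^ (q - 1) / 2 := by
          rw [intervalIntegral.integral_const, smul_eq_mul, sub_zero, rpow_sub_one hM₀.ne', ha]
          field_simp
  have hfar : ∫ x in a..1 / 2, f x ^ q ≤ M ^ (q - 1) / (2 * (q - 1)) :=
    calc ∫ x in a..1 / 2, f x ^ q ≤ ∫ x in a..1 / 2, (2 * x) ^ (-q) :=
          intervalIntegral.integral_mono_on ha₁ (hfq.intervalIntegrable _ _)
            (ContinuousOn.intervalIntegrable fun x hx => by
              rw [Set.uIcc_of_le ha₁] at hx
              exact (continuousWithinAt_id.const_mul 2).rpow_const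
                (Or.inl (mul_ne_zero two_ne_zero (ha₀.trans_le hx.1).ne')))
            fun x hx => by
              have hx₀ : 0 < x := ha₀.trans_le hx.1
              rw [rpow_neg (by positivity), ← inv_rpow (by positivity)]
              gcongr; exacts [hf₀ x, hfx x ⟨hx₀, hx.2⟩]
      _ ≤ (2 * a) ^ (1 - q) / (2 * (q - 1)) := integral_two_mul_rpow_neg_le ha₀ ha₁ hq
      _ = M ^ (q - 1) / (2 * (q - 1)) := by
          rw [ha, mul_inv, ← mul_assoc, mul_inv_cancel₀ two_ne_zero, one_mul, inv_rpow hM₀.le,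
            ← rpow_neg hM₀.le, neg_sub]
  calc ∫ x in (0 : ℝ)..1 / 2, f x ^ q
      = (∫ x in (0 : ℝ)..a, f x ^ q) + ∫ x in a..1 / 2, f x ^ q :=
        (intervalIntegral.integral_add_adjacent_intervals (hfq.intervalIntegrable _ _)
          (hfq.intervalIntegrable _ _)).symm
    _ ≤ M ^ (q - 1) / 2 + M ^ (q - 1) / (2 * (q - 1)) := add_le_add hnear hfar
    _ = q / (2 * (q - 1)) * M ^ (q - 1) := by field_simp; ring

lemma norm_intervalIntegral_mul_le_Lp_mul_Lq {E : Type*} [NormedRing E] [NormedSpace ℝ E]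
    [CompleteSpace E] {f g : ℝ → E} (hf : Continuous f) (hg : Continuous g) {p q : ℝ}
    (hpq : p.HolderConjugate q) {a b : ℝ} (hab : a ≤ b) :
    ‖∫ x in a..b, f x * g x‖
      ≤ (∫ x in a..b, ‖f x‖ ^ p) ^ (1 / p) * (∫ x in a..b, ‖g x‖ ^ q) ^ (1 / q) := by
  have hmemLp {h : ℝ → E} (hh : Continuous h) {r : ℝ} (hr : 0 < r) :
      MemLp h (ENNReal.ofReal r) (volume.restrict (Set.Ioc a b)) := by
    rw [← integrable_norm_rpow_iff hh.aestronglyMeasurable (by simpa using hr)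
      ENNReal.ofReal_ne_top, ENNReal.toReal_ofReal hr.le]
    exact (hh.norm.rpow_const fun _ => Or.inr hr.le).integrableOn_Ioc
  simp only [intervalIntegral.integral_of_le hab]
  calc ‖∫ x in Set.Ioc a b, f x * g x‖ ≤ ∫ x in Set.Ioc a b, ‖f x * g x‖ :=
        norm_integral_le_integral_norm _
    _ ≤ ∫ x in Set.Ioc a b, ‖f x‖ * ‖g x‖ :=
        integral_mono (hf.mul hg).norm.integrableOn_Ioc (hf.norm.mul hg.norm).integrableOn_Ioc
          fun x => norm_mul_le _ _
    _ ≤ _ := integral_mul_norm_le_Lp_mul_Lq hpq (hmemLp hf hpq.pos) (hmemLp hg hpq.symm.pos)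

lemma norm_exp_two_pi_I_mul (t : ℝ) : ‖cexp (2 * π * I * t)‖ = 1 := by
  rw [show 2 * π * I * t = ((2 * π * t : ℝ) : ℂ) * I by push_cast; ring, norm_exp_ofReal_mul_I]

lemma four_mul_le_norm_exp_two_pi_I_mul_sub_one {x : ℝ} (hx₀ : 0 ≤ x) (hx : x ≤ 1 / 2) :
    4 * x ≤ ‖cexp (2 * π * I * x) - 1‖ := by
  have hsin : 2 / π * (π * x) ≤ Real.sin (π * x) :=
    mul_le_sin (by positivity) (by nlinarith [pi_pos])
  rw [div_mul_eq_mul_div, mul_div_assoc, mul_div_cancel_left₀ _ pi_ne_zero] at hsin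
  rw [show cexp (2 * π * I * x) = cexp (I * (2 * π * x : ℝ)) by push_cast; ring_nf,
    norm_exp_I_mul_ofReal_sub_one, Real.norm_eq_abs, show 2 * π * x / 2 = π * x by ring,
    abs_of_nonneg (by linarith)]
  linarith

lemma norm_sum_Icc_pow_le {z : ℂ} (hz : ‖z‖ = 1) (hz₁ : z ≠ 1) (N : ℕ) :
    ‖∑ j ∈ Icc 1 N, z ^ j‖ ≤ 2 / ‖z - 1‖ := by
  rw [← Finset.Ico_add_one_right_eq_Icc, geom_sum_Ico hz₁ (by omega), norm_div]
  gcongr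
  calc ‖z ^ (N + 1) - z ^ 1‖ ≤ ‖z ^ (N + 1)‖ + ‖z ^ 1‖ := norm_sub_le _ _
    _ = 2 := by rw [norm_pow, norm_pow, hz, one_pow, one_pow, one_add_one_eq_two]

lemma exp_two_pi_I_nat_mul (j : ℕ) (x : ℝ) :
    cexp (2 * π * I * j * x) = cexp (2 * π * I * x) ^ j := by
  rw [← Complex.exp_nat_mul]; ring_nf

lemma norm_exp_two_pi_I_nat_mul (j : ℕ) (x : ℝ) : ‖cexp (2 * π * I * j * x)‖ = 1 := by
  rw [exp_two_pi_I_nat_mul, norm_pow, norm_exp_two_pi_I_mul, one_pow]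

lemma conj_exp_two_pi_I_nat_mul (j : ℕ) (x : ℝ) :
    conj (cexp (2 * π * I * j * x)) = cexp (-(2 * π * I * j * x)) := by
  rw [← Complex.exp_conj]
  congr 1
  simp only [map_mul, map_ofNat, conj_ofReal, conj_I, conj_natCast]
  ring

lemma exp_two_pi_I_nat_mul_one_sub (j : ℕ) (x : ℝ) :
    cexp (2 * π * I * j * (1 - x : ℝ)) = conj (cexp (2 * π * I * j * x)) := by
  rw [conj_exp_two_pi_I_nat_mul, show (2 * π * I * j * (1 - x : ℝ) : ℂ)
    = j * (2 * π * I) + -(2 * π * I * j * x) by push_cast; ring,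
    Complex.exp_add, exp_nat_mul_two_pi_mul_I, one_mul]

lemma integral_exp_two_pi_I_int_mul (m : ℤ) :
    ∫ x in (0 : ℝ)..1, cexp (2 * π * I * m * x) = if m = 0 then 1 else 0 := by
  split_ifs with hm
  · simp [hm]
  · have hc : 2 * π * I * m ≠ 0 := by simp [pi_ne_zero, I_ne_zero, hm]
    rw [integral_exp_mul_complex hc]
    push_cast
    rw [mul_one, mul_zero, show 2 * π * I * m = m * (2 * π * I) by ring,
      Complex.exp_int_mul_two_pi_mul_I, Complex.exp_zero, sub_self, zero_div]

lemma exp_two_pi_I_nat_mul_mul_conj (j k : ℕ) (x : ℝ) :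
    cexp (2 * π * I * j * x) * conj (cexp (2 * π * I * k * x))
      = cexp (2 * π * I * ((j - k : ℤ) : ℂ) * x) := by
  rw [conj_exp_two_pi_I_nat_mul, ← Complex.exp_add]
  push_cast; ring_nf

noncomputable def expSum (s : Finset ℕ) (a : ℕ → ℂ) (x : ℝ) : ℂ :=
  ∑ j ∈ s, a j * cexp (2 * π * I * j * x)

lemma continuous_expSum (s : Finset ℕ) (a : ℕ → ℂ) : Continuous (expSum s a) := by
  unfold expSum; fun_prop

lemma norm_expSum_le_card {s : Finset ℕ} {a : ℕ → ℂ}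
    (ha : ∀ j ∈ s, ‖a j‖ ≤ 1) (x : ℝ) : ‖expSum s a x‖ ≤ #s := by
  calc ‖expSum s a x‖ ≤ ∑ j ∈ s, ‖a j * cexp (2 * π * I * j * x)‖ := norm_sum_le _ _
    _ ≤ ∑ j ∈ s, 1 := sum_le_sum fun j hj => by
        rw [norm_mul, norm_exp_two_pi_I_nat_mul, mul_one]; exact ha j hj
    _ = #s := by simp

lemma norm_expSum_Icc_one_le (N : ℕ) {x : ℝ} (hx₀ : 0 < x) (hx : x ≤ 1 / 2) :
    ‖expSum (Icc 1 N) 1 x‖ ≤ (2 * x)⁻¹ := by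
  have hlow := four_mul_le_norm_exp_two_pi_I_mul_sub_one hx₀.le hx
  have hne : cexp (2 * π * I * x) ≠ 1 := by
    rintro h; rw [h, sub_self, norm_zero] at hlow; linarith
  simp only [expSum, Pi.one_apply, one_mul, exp_two_pi_I_nat_mul]
  calc _ ≤ 2 / ‖cexp (2 * π * I * x) - 1‖ :=
        norm_sum_Icc_pow_le (norm_exp_two_pi_I_mul x) hne N
    _ ≤ 2 / (4 * x) := by gcongr
    _ = (2 * x)⁻¹ := by field_simp; ring

lemma norm_expSum_one_one_sub (s : Finset ℕ) (x : ℝ) :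
    ‖expSum s 1 (1 - x)‖ = ‖expSum s 1 x‖ := by
  rw [← RCLike.norm_conj (expSum s 1 x)]
  simp only [expSum, Pi.one_apply, one_mul, map_sum, exp_two_pi_I_nat_mul_one_sub]

lemma integral_expSum_mul_conj (s : Finset ℕ) (a b : ℕ → ℂ) :
    ∫ x in (0 : ℝ)..1, expSum s a x * conj (expSum s b x) = ∑ j ∈ s, a j * conj (b j) := by
  have hexpand : ∀ x : ℝ, expSum s a x * conj (expSum s b x) =
      ∑ j ∈ s, ∑ k ∈ s,
        a j * conj (b k) * cexp (2 * π * I * ((j - k : ℤ) : ℂ) * x) := by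
    intro x
    simp only [expSum, map_sum, map_mul, sum_mul_sum, ← exp_two_pi_I_nat_mul_mul_conj]
    exact sum_congr rfl fun j _ => sum_congr rfl fun k _ => by ring
  simp_rw [hexpand]
  rw [intervalIntegral.integral_finsetSum fun j _ =>
    (continuous_finsetSum _ fun k _ => by fun_prop).intervalIntegrable _ _]
  refine sum_congr rfl fun j hj => ?_
  rw [intervalIntegral.integral_finsetSum fun k _ =>
    (by fun_prop : Continuous _).intervalIntegrable _ _]
  simp only [intervalIntegral.integral_const_mul, integral_exp_two_pi_I_int_mul, sub_eq_zero,
    Nat.cast_inj, mul_ite, mul_one, mul_zero]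
  rw [sum_ite_eq s j, if_pos hj]

lemma integral_norm_expSum_Icc_one_rpow_le {N : ℕ} (hN : 0 < N) {q : ℝ} (hq : 1 < q) :
    ∫ x in (0 : ℝ)..1, ‖expSum (Icc 1 N) 1 x‖ ^ q ≤ q / (q - 1) * N ^ (q - 1) := by
  set g : ℝ → ℝ := fun x => ‖expSum (Icc 1 N) 1 x‖ ^ q
  have hg : Continuous g :=
    (continuous_expSum _ _).norm.rpow_const fun _ => Or.inr (by linarith)
  have hhalf : ∫ x in (0 : ℝ)..1 / 2, g x ≤ q / (2 * (q - 1)) * N ^ (q - 1) :=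
    integral_rpow_le_of_le_min (continuous_expSum _ _).norm (fun _ => norm_nonneg _)
      (by exact_mod_cast hN) hq
      (fun x _ => (norm_expSum_le_card (a := 1) (fun j _ => by simp) x).trans_eq (by simp))
      (fun x hx => norm_expSum_Icc_one_le N hx.1 hx.2)
  have hreflect : ∫ x in (1 / 2 : ℝ)..1, g x = ∫ x in (0 : ℝ)..1 / 2, g x := by
    calc ∫ x in (1 / 2 : ℝ)..1, g x = ∫ x in (0 : ℝ)..1 / 2, g (1 - x) := by
          rw [intervalIntegral.integral_comp_sub_left]; norm_num
      _ = ∫ x in (0 : ℝ)..1 / 2, g x := by simp only [g, norm_expSum_one_one_sub]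
  calc ∫ x in (0 : ℝ)..1, g x
      = (∫ x in (0 : ℝ)..1 / 2, g x) + ∫ x in (1 / 2 : ℝ)..1, g x :=
        (intervalIntegral.integral_add_adjacent_intervals (hg.intervalIntegrable _ _)
          (hg.intervalIntegrable _ _)).symm
    _ = 2 * ∫ x in (0 : ℝ)..1 / 2, g x := by rw [hreflect, two_mul]
    _ ≤ 2 * (q / (2 * (q - 1)) * N ^ (q - 1)) := by gcongr
    _ = q / (q - 1) * N ^ (q - 1) := by
        have : q - 1 ≠ 0 := by linarith
        field_simp

lemma integral_norm_rpow_le_of_natCast_cpow_neg_half {F : ℝ → ℂ} {N : ℕ} (hN : 0 < N)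
    {α c : ℝ}
    (h : ∫ x in (0 : ℝ)..1, ‖(N : ℂ) ^ (-(1 / 2 : ℂ)) * F x‖ ^ α ≤ c) :
    ∫ x in (0 : ℝ)..1, ‖F x‖ ^ α ≤ c * N ^ (α / 2) := by
  have hN' : (0 : ℝ) < N := by exact_mod_cast hN
  have hscale : ∀ x,
      ‖(N : ℂ) ^ (-(1 / 2 : ℂ)) * F x‖ ^ α = ((N : ℝ) ^ (α / 2))⁻¹ * ‖F x‖ ^ α := by
    intro x
    rw [norm_mul, norm_natCast_cpow_of_pos hN, mul_rpow (by positivity) (norm_nonneg _),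
      ← rpow_mul hN'.le, ← rpow_neg hN'.le]
    congr 2
    norm_num
    ring
  simp only [hscale, intervalIntegral.integral_const_mul] at h
  rwa [inv_mul_le_iff₀ (by positivity), mul_comm] at h

lemma norm_sum_Icc_le_integral_norm_expSum_rpow (a : ℕ → ℂ) {N : ℕ} (hN : 0 < N) {p q : ℝ}
    (hpq : p.HolderConjugate q) :
    ‖∑ j ∈ Icc 1 N, a j‖ ≤
      (∫ x in (0 : ℝ)..1, ‖expSum (Icc 1 N) a x‖ ^ p) ^ (1 / p) *
        (p * N ^ (q - 1)) ^ (1 / q) := by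
  have hD : ∫ x in (0 : ℝ)..1, ‖conj (expSum (Icc 1 N) 1 x)‖ ^ q ≤ p * N ^ (q - 1) := by
    simpa only [RCLike.norm_conj, ← hpq.symm.conjugate_eq] using
      integral_norm_expSum_Icc_one_rpow_le hN hpq.symm.lt
  have hD₀ : 0 ≤ ∫ x in (0 : ℝ)..1, ‖conj (expSum (Icc 1 N) 1 x)‖ ^ q :=
    intervalIntegral.integral_nonneg zero_le_one fun _ _ => by positivity
  have hq₀ := hpq.symm.pos
  calc ‖∑ j ∈ Icc 1 N, a j‖
      = ‖∫ x in (0 : ℝ)..1, expSum (Icc 1 N) a x * conj (expSum (Icc 1 N) 1 x)‖ := by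
        simp [integral_expSum_mul_conj]
    _ ≤ (∫ x in (0 : ℝ)..1, ‖expSum (Icc 1 N) a x‖ ^ p) ^ (1 / p) *
          (∫ x in (0 : ℝ)..1, ‖conj (expSum (Icc 1 N) 1 x)‖ ^ q) ^ (1 / q) :=
        norm_intervalIntegral_mul_le_Lp_mul_Lq (continuous_expSum _ _)
          (continuous_conj.comp (continuous_expSum _ _)) hpq zero_le_one
    _ ≤ _ := by
        gcongr
        exact rpow_nonneg (intervalIntegral.integral_nonneg zero_le_one fun _ _ => by positivity) _

theorem liouville_integral_bound_implies_partial_sum_bound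
    (α : ℝ) (hα : 1 < α) (c : ℝ) (hc : 0 < c)
    (h : ∀ N : ℕ, 0 < N →
      ∫ x in (0:ℝ)..1,
          (‖(N : ℂ) ^ (-(1/2 : ℂ)) *
            ∑ j ∈ Finset.Icc 1 N, (liouvilleFun j : ℂ) *
              Complex.exp (2 * Real.pi * Complex.I * j * x)‖) ^ α ≤ c) :
    ∃ C : ℝ, 0 < C ∧ ∀ N : ℕ, 0 < N →
      |∑ j ∈ Finset.Icc 1 N, (liouvilleFun j : ℝ)| ≤ C * (N : ℝ) ^ (1/2 + 1/α) := by
  obtain ⟨q, hpq⟩ : ∃ q, α.HolderConjugate q := ⟨_, .conjExponent hα⟩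
  refine ⟨c ^ (1 / α) * α ^ (1 / q), by positivity, fun N hN => ?_⟩
  have hN' : (0 : ℝ) < N := by exact_mod_cast hN
  set F := expSum (Icc 1 N) fun j => (liouvilleFun j : ℂ)
  have hF : ∫ x in (0 : ℝ)..1, ‖F x‖ ^ α ≤ c * N ^ (α / 2) :=
    integral_norm_rpow_le_of_natCast_cpow_neg_half hN (h N hN)
  have hF₀ : 0 ≤ ∫ x in (0 : ℝ)..1, ‖F x‖ ^ α :=
    intervalIntegral.integral_nonneg zero_le_one fun _ _ => by positivity
  have hα₀ := hpq.pos
  calc |∑ j ∈ Icc 1 N, (liouvilleFun j : ℝ)|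
      = ‖∑ j ∈ Icc 1 N, (liouvilleFun j : ℂ)‖ := by
        rw [← Real.norm_eq_abs, ← Complex.norm_real]; push_cast; rfl
    _ ≤ (∫ x in (0 : ℝ)..1, ‖F x‖ ^ α) ^ (1 / α) * (α * N ^ (q - 1)) ^ (1 / q) :=
        norm_sum_Icc_le_integral_norm_expSum_rpow _ hN hpq
    _ ≤ (c * N ^ (α / 2)) ^ (1 / α) * (α * N ^ (q - 1)) ^ (1 / q) := by gcongr
    _ = c ^ (1 / α) * α ^ (1 / q) * N ^ (1 / 2 + 1 / α) := by
        rw [mul_rpow hc.le (by positivity), mul_rpow hα₀.le (by positivity),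
          ← rpow_mul hN'.le, ← rpow_mul hN'.le, rpow_add hN',
          show α / 2 * (1 / α) = 1 / 2 by field_simp,
          show (q - 1) * (1 / q) = 1 / α by
            rw [one_div, one_div, ← hpq.symm.one_sub_inv, sub_mul, one_mul,
              mul_inv_cancel₀ hpq.symm.ne_zero]]
        ring
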